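/- arXiv:q-alg/9711009 — 2 statements merged into one kernel-verified Lean document; each statement's English description precedes it below -/
import Mathlib

section
/- Fix n ≥ 2 and l ≥ 1. (i) For every sequence s ∈ B_l^ℕ, the infinite tableau T_{ρ(s)}(s) is nonmovable. (ii) For every h ∈ {0,1,…,l}^ℕ, the assignment s ↦ T_h(s) defines a bijection from ρ^{−1}(h) onto the set of nonmovable tableaux of shape κ̃(h) with entries in {1,…,n}. -/
/-!
Statement 2: spectral decomposition of the path space; the map
`s ↦ T_{ρ(s)}(s)` and the bijection `ρ⁻¹(h) ≃ NMT(κ̃(h))`.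

Infinite skew diagrams `κ̃(h)` are encoded by row data indexed by `ℕ`
**from the bottom**: the `i`-th row (from the bottom) has `l` boxes and
occupies the (0-indexed) columns `O i, …, O i + l - 1`, where
`O 0 = 0`, `O (i+1) = O i + h i`.  A filling is `f : ℕ → ℕ → ℕ`, `f i k`
being the entry of the `k`-th box of the `i`-th row from the bottom;
entries are positive inside the shape and `0` outside.  The tableau
`T_h(s)` of a path `s` is `s` itself, viewed as a filling of `κ̃(h)`.
-/

def H1 (a b : ℕ) : ℕ := if a < b then 0 else 1

noncomputable def Hl (l : ℕ) (a b : ℕ → ℕ) : ℕ :=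
  Finset.univ.inf' ⟨1, Finset.mem_univ _⟩
    (fun σ : Equiv.Perm (Fin l) => ∑ i : Fin l, H1 (a i) (b (σ i)))

def IsBRow (n l : ℕ) (a : ℕ → ℕ) : Prop :=
  (∀ k, k + 1 < l → a k ≤ a (k + 1)) ∧ (∀ k, k < l → 1 ≤ a k ∧ a k ≤ n) ∧
    (∀ k, l ≤ k → a k = 0)

/-- an element of `B_l^ℕ`. -/
def IsPath (n l : ℕ) (s : ℕ → ℕ → ℕ) : Prop := ∀ i, IsBRow n l (s i)

/-- the local energy map `ρ(s)_i = H_l(s_{i+1}, s_i)`. -/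
noncomputable def locEnergy (l : ℕ) (s : ℕ → ℕ → ℕ) : ℕ → ℕ :=
  fun i => Hl l (s (i + 1)) (s i)

/-- offsets of the rows of `κ̃(h)` (rows indexed from the bottom). -/
def Ooff (h : ℕ → ℕ) : ℕ → ℕ := fun i => ∑ j ∈ Finset.range i, h j

def InfIsFilling (len : ℕ → ℕ) (f : ℕ → ℕ → ℕ) : Prop :=
  (∀ i k, k < len i → 0 < f i k) ∧ (∀ i k, len i ≤ k → f i k = 0)

def InfEntriesLE (n : ℕ) (f : ℕ → ℕ → ℕ) : Prop := ∀ i k, f i k ≤ n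

def InfRowsWeak (len : ℕ → ℕ) (f : ℕ → ℕ → ℕ) : Prop :=
  ∀ i k, k + 1 < len i → f i k ≤ f i (k + 1)

/-- columns strictly increase from top to bottom; row `i+1` lies above row `i`. -/
def InfColsStrict (off len : ℕ → ℕ) (f : ℕ → ℕ → ℕ) : Prop :=
  ∀ i j, off (i + 1) ≤ j → j < off (i + 1) + len (i + 1) →
    off i ≤ j → j < off i + len i →
    f (i + 1) (j - off (i + 1)) < f i (j - off i)

def InfSemistandard (off len : ℕ → ℕ) (f : ℕ → ℕ → ℕ) : Prop :=
  InfRowsWeak len f ∧ InfColsStrict off len f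

/-- the row data describes a skew diagram (rows listed bottom to top). -/
def InfIsSkewShape (off len : ℕ → ℕ) : Prop :=
  ∀ i, off i ≤ off (i + 1) ∧ off i + len i ≤ off (i + 1) + len (i + 1)

def InfShift (off : ℕ → ℕ) (i0 : ℕ) : ℕ → ℕ := fun i => if i = i0 then off i - 1 else off i

def InfNonmovable (off len : ℕ → ℕ) (f : ℕ → ℕ → ℕ) : Prop :=
  InfSemistandard off len f ∧
  ∀ i0, 0 < len i0 →
    ¬ (0 < off i0 ∧ InfIsSkewShape (InfShift off i0) len ∧
        InfSemistandard (InfShift off i0) len f)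

/-- the set of nonmovable tableaux of shape `κ̃(h)` with entries in `{1,…,n}`. -/
def NMTinf (n l : ℕ) (h : ℕ → ℕ) : Set (ℕ → ℕ → ℕ) :=
  {f | InfIsFilling (fun _ => l) f ∧ InfEntriesLE n f ∧
    InfNonmovable (Ooff h) (fun _ => l) f}

/-!
For weakly increasing rows `a`, `b` of length `l`, the energy `H_l(a, b)` is the least shift `d`
such that `a`, placed `d` columns to the right of `b` and directly above it, is column-strict: the
cyclic rotation by `d` matches all but `d` letters of `a` with larger letters of `b`, and a
pigeonhole count shows that no permutation does better. In a tableau whose rows all have length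
`l`, moving row `i + 1` one column to the left narrows the gap above row `i` by one and only widens
the gap above row `i + 1`; so the tableau is nonmovable exactly when every gap is the least
admissible one, i.e. when its gaps are the local energies of its rows.
-/

open Finset

/-- Row `a`, placed `d` columns to the right of row `b` and directly above it, is column-strict. -/
def ShiftAdmissible (l : ℕ) (a b : ℕ → ℕ) (d : ℕ) : Prop := ∀ k, k + d < l → a k < b (k + d)

noncomputable def minShift (l : ℕ) (a b : ℕ → ℕ) : ℕ := sInf {d | ShiftAdmissible l a b d}

lemma monotoneOn_Iio_of_le_succ {l : ℕ} {a : ℕ → ℕ} (h : ∀ k, k + 1 < l → a k ≤ a (k + 1)) :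
    MonotoneOn a (Set.Iio l) :=
  monotoneOn_of_le_succ Set.ordConnected_Iio fun k _ _ hk => h k hk

section MinShift

variable {l : ℕ} {a b : ℕ → ℕ}

lemma shiftAdmissible_len : ShiftAdmissible l a b l := fun _ hk => absurd hk (by omega)

lemma ShiftAdmissible.mono (hb : MonotoneOn b (Set.Iio l)) {d d' : ℕ} (hdd : d ≤ d')
    (h : ShiftAdmissible l a b d) : ShiftAdmissible l a b d' := fun k hk =>
  (h k (by omega)).trans_le (hb (by simp; omega) (by simp; omega) (by omega))

lemma minShift_spec : ShiftAdmissible l a b (minShift l a b) :=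
  Nat.sInf_mem (s := {d | ShiftAdmissible l a b d}) ⟨l, shiftAdmissible_len⟩

lemma minShift_le {d : ℕ} (h : ShiftAdmissible l a b d) : minShift l a b ≤ d := Nat.sInf_le h

lemma not_shiftAdmissible_of_lt_minShift {d : ℕ} (hd : d < minShift l a b) :
    ¬ ShiftAdmissible l a b d :=
  Nat.notMem_of_lt_sInf hd

lemma H1_le_one (x y : ℕ) : H1 x y ≤ 1 := by
  unfold H1; split <;> omega

lemma Hl_le_minShift : Hl l a b ≤ minShift l a b := by
  obtain hlt | heq := (minShift_le (a := a) (b := b) shiftAdmissible_len).lt_or_eq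
  · set e := minShift l a b
    have hspec : ShiftAdmissible l a b e := minShift_spec
    have : NeZero l := ⟨by omega⟩
    let σ : Equiv.Perm (Fin l) := Equiv.addRight ⟨e, hlt⟩
    have hterm (i : Fin l) : H1 (a i) (b (σ i)) ≤ if (i : ℕ) + e < l then 0 else 1 := by
      split_ifs with hi
      · have hσ : ((σ i : Fin l) : ℕ) = i + e := by
          simp only [σ, Equiv.coe_addRight, Fin.val_add, Nat.mod_eq_of_lt hi]
        simp [H1, hσ, hspec i hi]
      · exact H1_le_one _ _
    calc Hl l a b ≤ ∑ i : Fin l, H1 (a i) (b (σ i)) := inf'_le _ (mem_univ σ)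
      _ ≤ ∑ i : Fin l, if (i : ℕ) + e < l then 0 else 1 := sum_le_sum fun i _ => hterm i
      _ = ∑ i ∈ range l, if i + e < l then 0 else 1 :=
          Fin.sum_univ_eq_sum_range (fun i => if i + e < l then 0 else 1) l
      _ = e := by
          conv_lhs => rw [← Nat.sub_add_cancel hlt.le, sum_range_add]
          rw [sum_congr rfl fun i hi => if_pos (by simp at hi; omega),
            sum_congr rfl fun i hi => if_neg (by simp at hi; omega)]
          simp
  · calc Hl l a b ≤ ∑ i : Fin l, H1 (a i) (b ((1 : Equiv.Perm (Fin l)) i)) :=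
          inf'_le _ (mem_univ 1)
      _ ≤ ∑ _i : Fin l, 1 := sum_le_sum fun i _ => H1_le_one _ _
      _ = minShift l a b := by simp [heq]

/-- If the cost `c` of `σ` were not an admissible shift, witnessed at `k`, then the letters of `a`
from position `k` on that `σ` sends to positions at most `k + c` of `b` would be at least `c + 1`
letters paying `1` each. -/
lemma minShift_le_sum_H1 (ha : MonotoneOn a (Set.Iio l)) (hb : MonotoneOn b (Set.Iio l))
    (σ : Equiv.Perm (Fin l)) : minShift l a b ≤ ∑ i : Fin l, H1 (a i) (b (σ i)) := by
  set c := ∑ i : Fin l, H1 (a i) (b (σ i))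
  refine minShift_le fun k hk => ?_
  by_contra hba
  let A : Finset (Fin l) := Ici ⟨k, by omega⟩
  let B : Finset (Fin l) := univ.filter fun i => σ i ≤ ⟨k + c, hk⟩
  have hcardB : #B = k + c + 1 := by
    rw [card_equiv σ (t := Iic ⟨k + c, hk⟩) (fun i => by simp [B]), Fin.card_Iic]
  have hcardAB : c + 1 ≤ #(A ∩ B) := by
    have := card_union_add_card_inter A B
    have := card_le_univ (A ∪ B)
    simp only [A, Fin.card_Ici, Fintype.card_fin] at *
    omega
  have hpay : ∀ i ∈ A ∩ B, H1 (a i) (b (σ i)) = 1 := by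
    intro i hi
    simp only [A, B, mem_inter, mem_Ici, mem_filter, Fin.le_def] at hi
    have h1 : a k ≤ a i := ha (by simp; omega) (by simp) hi.1
    have h2 : b (σ i) ≤ b (k + c) := hb (by simp) (by simp; omega) hi.2.2
    simp only [H1, if_neg (show ¬ a i < b (σ i) by omega)]
  have := calc #(A ∩ B) = ∑ i ∈ A ∩ B, H1 (a i) (b (σ i)) := by rw [sum_congr rfl hpay]; simp
    _ ≤ c := sum_le_sum_of_subset (subset_univ _)
  omega

lemma Hl_eq_minShift (ha : MonotoneOn a (Set.Iio l)) (hb : MonotoneOn b (Set.Iio l)) :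
    Hl l a b = minShift l a b :=
  Hl_le_minShift.antisymm (le_inf' _ _ fun σ _ => minShift_le_sum_H1 ha hb σ)

end MinShift

lemma isPath_iff {n l : ℕ} {f : ℕ → ℕ → ℕ} :
    IsPath n l f ↔ InfIsFilling (fun _ => l) f ∧ InfEntriesLE n f ∧ InfRowsWeak (fun _ => l) f := by
  constructor
  · intro hf
    refine ⟨⟨fun i k hk => ((hf i).2.1 k hk).1, fun i k hk => (hf i).2.2 k hk⟩,
      fun i k => ?_, fun i => (hf i).1⟩
    rcases Nat.lt_or_ge k l with hk | hk
    · exact ((hf i).2.1 k hk).2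
    · simp [(hf i).2.2 k hk]
  · rintro ⟨⟨hpos, hzero⟩, hle, hrows⟩ i
    exact ⟨hrows i, fun k hk => ⟨hpos i k hk, hle i k⟩, hzero i⟩

lemma locEnergy_eq_minShift {l : ℕ} {f : ℕ → ℕ → ℕ} (hf : InfRowsWeak (fun _ => l) f) (i : ℕ) :
    locEnergy l f i = minShift l (f (i + 1)) (f i) :=
  Hl_eq_minShift (monotoneOn_Iio_of_le_succ (hf (i + 1))) (monotoneOn_Iio_of_le_succ (hf i))

lemma Ooff_zero (h : ℕ → ℕ) : Ooff h 0 = 0 := rfl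

lemma Ooff_succ_sub (h : ℕ → ℕ) (i : ℕ) : Ooff h (i + 1) - Ooff h i = h i := by
  simp [Ooff, sum_range_succ]

lemma Ooff_monotone (h : ℕ → ℕ) : Monotone (Ooff h) :=
  monotone_nat_of_le_succ fun i => by simp [Ooff, sum_range_succ]

section ConstantRowLength

variable {l : ℕ} {off : ℕ → ℕ} {f : ℕ → ℕ → ℕ}

lemma infIsSkewShape_const_iff : InfIsSkewShape off (fun _ => l) ↔ Monotone off := by
  simp only [InfIsSkewShape, add_le_add_iff_right, and_self]
  exact ⟨monotone_nat_of_le_succ, fun h i => h i.le_succ⟩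

lemma infColsStrict_const_iff (hoff : Monotone off) :
    InfColsStrict off (fun _ => l) f ↔
      ∀ i, ShiftAdmissible l (f (i + 1)) (f i) (off (i + 1) - off i) := by
  have hstep (i : ℕ) : off i ≤ off (i + 1) := hoff i.le_succ
  constructor
  · intro H i k hk
    have := H i (off (i + 1) + k) (by omega) (by dsimp only; omega) (by grind) (by dsimp only; grind)
    rwa [show off (i + 1) + k - off (i + 1) = k by omega,
      show off (i + 1) + k - off i = k + (off (i + 1) - off i) by grind] at this
  · intro H i j hj₁ hj₂ hj₃ hj₄
    have := H i (j - off (i + 1)) (by grind)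
    rwa [show j - off (i + 1) + (off (i + 1) - off i) = j - off i by grind] at this

lemma InfShift_apply_self (i : ℕ) : InfShift off i i = off i - 1 := if_pos rfl

lemma InfShift_apply_of_ne {i j : ℕ} (h : j ≠ i) : InfShift off i j = off j := if_neg h

lemma sub_le_InfShift_sub {i j : ℕ} (h : j + 1 ≠ i) :
    off (j + 1) - off j ≤ InfShift off i (j + 1) - InfShift off i j := by
  unfold InfShift; split_ifs <;> omega

/-- Otherwise row `i + 1` could be moved one column to the left. -/
lemma minShift_eq_of_infNonmovable (hoff : Monotone off)
    (hnm : InfNonmovable off (fun _ => l) f) (i : ℕ) (hgap : off (i + 1) - off i ≤ l) :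
    minShift l (f (i + 1)) (f i) = off (i + 1) - off i := by
  obtain ⟨⟨hrows, hcols⟩, hmove⟩ := hnm
  have hadm := (infColsStrict_const_iff hoff).1 hcols
  refine (minShift_le (hadm i)).antisymm (not_lt.1 fun hlt => hmove (i + 1) (by dsimp only; omega) ?_)
  have hstep (j : ℕ) : off j ≤ off (j + 1) := hoff j.le_succ
  have hmono : Monotone (InfShift off (i + 1)) := monotone_nat_of_le_succ fun j => by
    unfold InfShift; split_ifs <;> grind
  have hb (j : ℕ) : MonotoneOn (f j) (Set.Iio l) := monotoneOn_Iio_of_le_succ (hrows j)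
  refine ⟨by omega, infIsSkewShape_const_iff.2 hmono, hrows,
    (infColsStrict_const_iff hmono).2 fun j => ?_⟩
  by_cases hji : j = i
  · subst hji
    refine minShift_spec.mono (hb j) ?_
    rw [InfShift_apply_self, InfShift_apply_of_ne (by omega)]
    omega
  · exact (hadm j).mono (hb j) (sub_le_InfShift_sub (by omega))

lemma infNonmovable_of_minShift_eq (hoff : Monotone off) (h0 : off 0 = 0)
    (hrows : InfRowsWeak (fun _ => l) f)
    (hmin : ∀ i, minShift l (f (i + 1)) (f i) = off (i + 1) - off i) :
    InfNonmovable off (fun _ => l) f := by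
  refine ⟨⟨hrows, (infColsStrict_const_iff hoff).2 fun i => hmin i ▸ minShift_spec⟩, ?_⟩
  rintro (_ | i) _ ⟨hpos, hskew, -, hcols⟩
  · omega
  · have hmono := infIsSkewShape_const_iff.1 hskew
    have hadm := (infColsStrict_const_iff hmono).1 hcols i
    have hstep := hmono i.le_succ
    rw [InfShift_apply_self, InfShift_apply_of_ne (by omega)] at hadm hstep
    exact not_shiftAdmissible_of_lt_minShift (by rw [hmin]; omega) hadm

end ConstantRowLength

theorem path_tableau_bijection_general (n l : ℕ) :
    (∀ s : ℕ → ℕ → ℕ, IsPath n l s →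
      InfNonmovable (Ooff (locEnergy l s)) (fun _ => l) s) ∧
    (∀ h : ℕ → ℕ, (∀ i, h i ≤ l) →
      Set.BijOn (fun s => s) {s | IsPath n l s ∧ locEnergy l s = h}
        (NMTinf n l h)) := by
  have nonmovable (s : ℕ → ℕ → ℕ) (hs : IsPath n l s) :
      InfNonmovable (Ooff (locEnergy l s)) (fun _ => l) s := by
    have hrows := (isPath_iff.1 hs).2.2
    refine infNonmovable_of_minShift_eq (Ooff_monotone _) (Ooff_zero _) hrows fun i => ?_
    rw [Ooff_succ_sub, locEnergy_eq_minShift hrows]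
  refine ⟨nonmovable, fun h hh => ⟨?_, fun _ _ _ _ => id, ?_⟩⟩
  · rintro s ⟨hs, rfl⟩
    obtain ⟨hfill, hle, -⟩ := isPath_iff.1 hs
    exact ⟨hfill, hle, nonmovable s hs⟩
  · rintro f ⟨hfill, hle, hnm⟩
    refine ⟨f, ⟨isPath_iff.2 ⟨hfill, hle, hnm.1.1⟩, funext fun i => ?_⟩, rfl⟩
    rw [locEnergy_eq_minShift hnm.1.1, ← Ooff_succ_sub h i,
      minShift_eq_of_infNonmovable (Ooff_monotone h) hnm i (by rw [Ooff_succ_sub]; exact hh i)]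

/-- (i) for every `s ∈ B_l^ℕ`, the tableau `T_{ρ(s)}(s)` is
nonmovable; (ii) for every `h ∈ {0,…,l}^ℕ`, the assignment `s ↦ T_h(s)`
(which, in this encoding, is the identity on fillings) is a bijection from
`ρ⁻¹(h)` onto the nonmovable tableaux of shape `κ̃(h)` with entries in `{1,…,n}`. -/
theorem path_tableau_bijection (n l : ℕ) (hn : 2 ≤ n) (hl : 1 ≤ l) :
    (∀ s : ℕ → ℕ → ℕ, IsPath n l s →
      InfNonmovable (Ooff (locEnergy l s)) (fun _ => l) s) ∧
    (∀ h : ℕ → ℕ, (∀ i, h i ≤ l) →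
      Set.BijOn (fun s => s) {s | IsPath n l s ∧ locEnergy l s = h}
        (NMTinf n l h)) :=
  path_tableau_bijection_general n l
end

section
/- Fix n ≥ 2, l ≥ 1 and K = (k_i) ∈ 𝒦_l. A sequence h = (h_i) ∈ {0,1,…,l}^ℕ belongs to the spectrum Sp_K if and only if both of the following hold: (i) h_i + h_{i+1} + ⋯ + h_{i+n−1} ≥ l for every i ≥ 1, and (ii) h ≈ K. -/
/-- `K ∈ 𝒦_l`: an `n`-periodic sequence of nonnegative integers with
`k_1 + ⋯ + k_n = l` (0-indexed). -/
def IsKseq (n l : ℕ) (K : ℕ → ℕ) : Prop :=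
  (∀ i, K (i + n) = K i) ∧ (∑ i ∈ Finset.range n, K i = l)

/-- partial sums `k_i + k_{i+1} + ⋯ + k_{i+a-1}`. -/
def Psum (K : ℕ → ℕ) (i a : ℕ) : ℕ := ∑ j ∈ Finset.range a, K (i + j)

/-- the ground-state path `s^{(K)}`: row `i` consists of `k_i` entries `1`,
`k_{i+1}` entries `2`, …, `k_{i+n-1}` entries `n`. -/
def gsPath (n l : ℕ) (K : ℕ → ℕ) : ℕ → ℕ → ℕ :=
  fun i k => if k < l then
      1 + ((Finset.range n).filter (fun a => Psum K i (a + 1) ≤ k)).card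
    else 0

/-- `a ≈ b`: the sequences differ in only finitely many places. -/
def FinDiff {α : Type*} (a b : ℕ → α) : Prop := ({i | a i ≠ b i}).Finite

/-- the spectrum `Sp_K = ρ(S_K)`. -/
def SpSet (n l : ℕ) (K : ℕ → ℕ) : Set (ℕ → ℕ) :=
  {h | ∃ s : ℕ → ℕ → ℕ, IsPath n l s ∧ FinDiff s (gsPath n l K) ∧ locEnergy l s = h}

/-!
Write `N_c(a)` for the number of entries `≥ c` of a row `a`. In any matching `σ` of `a` against
`b`, an entry `a_i ≥ c` either meets a partner `b_{σ i} ≥ c + 1` or contributes `1` to the energy,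
so `N_c(a) ≤ H_l(a, b) + N_{c+1}(b)`. Telescoping this along `n` consecutive rows of a path, from
`N_{n+1} = 0` to `N_1 = l`, gives the window condition `h_i + ⋯ + h_{i+n-1} ≥ l`.

Conversely, a sequence `h` satisfying the window condition can replace `K` in the construction of
the ground-state path, and the resulting path has local energy exactly `h`: the inequality above
with `c = 1` is the lower bound, and the cyclic shift of the positions by `h_i` is a matching of
cost at most `h_i`. Row `i` of that path only involves `h_i, …, h_{i+n-1}`, so `h ≈ K` makes it a
path in `S_K`. Applied to `K` itself this gives `ρ(s^{(K)}) = K`, hence `h ≈ K` on the spectrum.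
-/

open Finset Filter

def numGE (l c : ℕ) (a : ℕ → ℕ) : ℕ := #{k ∈ range l | c ≤ a k}

lemma numGE_eq_sum_fin (l c : ℕ) (a : ℕ → ℕ) :
    numGE l c a = ∑ i : Fin l, if c ≤ a i then 1 else 0 := by
  rw [numGE, card_filter, Fin.sum_univ_eq_sum_range (fun k => if c ≤ a k then 1 else 0)]

lemma Hl_le_sum_H1 (l : ℕ) (a b : ℕ → ℕ) (σ : Equiv.Perm (Fin l)) :
    Hl l a b ≤ ∑ i : Fin l, H1 (a i) (b (σ i)) :=
  inf'_le _ (mem_univ σ)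

lemma numGE_le_sum_H1_add (l c : ℕ) (a b : ℕ → ℕ) (σ : Equiv.Perm (Fin l)) :
    numGE l c a ≤ ∑ i : Fin l, H1 (a i) (b (σ i)) + numGE l (c + 1) b := by
  rw [numGE_eq_sum_fin, numGE_eq_sum_fin,
    ← Equiv.sum_comp σ (fun j : Fin l => if c + 1 ≤ b j then 1 else 0), ← sum_add_distrib]
  exact sum_le_sum fun i _ => by unfold H1; split_ifs <;> omega

lemma numGE_le_Hl_add (l c : ℕ) (a b : ℕ → ℕ) : numGE l c a ≤ Hl l a b + numGE l (c + 1) b := by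
  obtain ⟨σ, -, hσ⟩ := exists_mem_eq_inf' univ_nonempty
    (fun σ : Equiv.Perm (Fin l) => ∑ i : Fin l, H1 (a i) (b (σ i)))
  rw [Hl, hσ]
  exact numGE_le_sum_H1_add l c a b σ

lemma numGE_le_sum_locEnergy_add (l : ℕ) (s : ℕ → ℕ → ℕ) (c i m : ℕ) :
    numGE l c (s (i + m)) ≤ ∑ j ∈ range m, locEnergy l s (i + j) + numGE l (c + m) (s i) := by
  induction m generalizing c with
  | zero => simp
  | succ m ih =>
    have hstep := numGE_le_Hl_add l c (s (i + m + 1)) (s (i + m))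
    have hrest := ih (c + 1)
    rw [sum_range_succ, ← add_assoc i m 1, show c + (m + 1) = c + 1 + m by omega]
    simp only [locEnergy] at hrest ⊢
    omega

namespace IsBRow

variable {n l : ℕ} {a : ℕ → ℕ}

lemma numGE_one (ha : IsBRow n l a) : numGE l 1 a = l := by
  rw [numGE, filter_true_of_mem fun k hk => (ha.2.1 k (mem_range.1 hk)).1, card_range]

lemma numGE_eq_zero (ha : IsBRow n l a) {c : ℕ} (hc : n < c) : numGE l c a = 0 := by
  rw [numGE, card_eq_zero, filter_eq_empty_iff]
  intro k hk
  have := (ha.2.1 k (mem_range.1 hk)).2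
  omega

end IsBRow

lemma IsPath.le_Psum_locEnergy {n l : ℕ} {s : ℕ → ℕ → ℕ} (hs : IsPath n l s) (i : ℕ) :
    l ≤ Psum (locEnergy l s) i n := by
  have := numGE_le_sum_locEnergy_add l s 1 i n
  rwa [(hs _).numGE_one, (hs i).numGE_eq_zero (by omega), add_zero] at this

section Psum

variable (K : ℕ → ℕ) (i : ℕ)

lemma Psum_mono : Monotone (Psum K i) :=
  fun _ _ hab => sum_le_sum_of_subset (range_subset_range.2 hab)

lemma Psum_one : Psum K i 1 = K i := by simp [Psum]

lemma Psum_succ (a : ℕ) : Psum K i (a + 1) = K i + Psum K (i + 1) a := by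
  rw [Psum, Psum, sum_range_succ', add_zero, add_comm]
  exact congrArg (K i + ·) (sum_congr rfl fun j _ => congrArg K (by omega))

lemma Psum_succ' (a : ℕ) : Psum K i (a + 1) = Psum K i a + K (i + a) :=
  sum_range_succ _ _

end Psum

lemma le_card_filter_range_iff {q : ℕ → Prop} [DecidablePred q] (hq : Antitone q) (h0 : q 0)
    {m n : ℕ} (hm : m ≤ n) : m ≤ #{a ∈ range n | q (a + 1)} ↔ q m := by
  constructor
  · intro hcard
    by_contra hqm
    have hsub : {a ∈ range n | q (a + 1)} ⊆ range (m - 1) := fun a ha => by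
      simp only [mem_filter, mem_range] at ha ⊢
      by_contra
      exact hqm (hq (by omega) ha.2)
    have := card_le_card hsub
    rw [card_range] at this
    rcases m with _ | m
    · exact hqm h0
    · omega
  · intro hqm
    calc m = #(range m) := (card_range m).symm
      _ ≤ _ := card_le_card fun a ha => by
        simp only [mem_filter, mem_range] at ha ⊢
        exact ⟨by omega, hq (by omega) hqm⟩

section GroundState

variable {n l : ℕ} {h : ℕ → ℕ}

lemma le_gsPath_iff (i : ℕ) {k m : ℕ} (hk : k < l) (hm : m ≤ n) :
    m + 1 ≤ gsPath n l h i k ↔ Psum h i m ≤ k := by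
  rw [gsPath, if_pos hk, add_comm 1, Nat.add_le_add_iff_right]
  exact le_card_filter_range_iff (fun _ _ hab hle => (Psum_mono h i hab).trans hle)
    (Nat.zero_le k) hm

lemma numGE_gsPath (i : ℕ) {c : ℕ} (hc : c ≤ n) :
    numGE l (c + 1) (gsPath n l h i) = l - Psum h i c := by
  have hfilter : {k ∈ range l | c + 1 ≤ gsPath n l h i k} = Ico (Psum h i c) l := by
    ext k
    simp only [mem_filter, mem_range, mem_Ico]
    exact ⟨fun ⟨hk, hge⟩ => ⟨(le_gsPath_iff i hk hc).1 hge, hk⟩,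
      fun ⟨hle, hk⟩ => ⟨hk, (le_gsPath_iff i hk hc).2 hle⟩⟩
  rw [numGE, hfilter, Nat.card_Ico]

lemma gsPath_isPath (hw : ∀ i, l ≤ Psum h i n) : IsPath n l (gsPath n l h) := by
  intro i
  refine ⟨fun k hk => ?_, fun k hk => ⟨?_, ?_⟩, fun k hk => ?_⟩
  · simp only [gsPath, if_pos (by omega : k < l), if_pos hk]
    gcongr with a
    omega
  · simp [gsPath, hk]
  · by_contra hgt
    have := (le_gsPath_iff (h := h) i hk le_rfl).1 (not_le.1 hgt)
    have := hw i
    omega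
  · simp [gsPath, not_lt.2 hk]

lemma gsPath_succ_lt_gsPath (hw : ∀ i, l ≤ Psum h i n) {i k : ℕ} (hk : k + h i < l) :
    gsPath n l h (i + 1) k < gsPath n l h i (k + h i) := by
  obtain ⟨hv1, hvn⟩ := (gsPath_isPath hw (i + 1)).2.1 k (by omega)
  set v := gsPath n l h (i + 1) k
  have hprev : Psum h (i + 1) (v - 1) ≤ k :=
    (le_gsPath_iff (n := n) (i + 1) (by omega) (by omega)).1 (Nat.sub_add_cancel hv1).le
  have hcur : Psum h i v ≤ k + h i := by
    rw [← Nat.sub_add_cancel hv1, Psum_succ]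
    omega
  exact (le_gsPath_iff i hk hvn).2 hcur

lemma le_Hl_gsPath (hl : 0 < l) (hw : ∀ i, l ≤ Psum h i n) {i : ℕ} (hhi : h i ≤ l) :
    h i ≤ Hl l (gsPath n l h (i + 1)) (gsPath n l h i) := by
  have hn : 1 ≤ n := Nat.pos_of_ne_zero fun hn => by simpa [hn, Psum] using (hw 0).trans_lt' hl
  have := numGE_le_Hl_add l 1 (gsPath n l h (i + 1)) (gsPath n l h i)
  rw [(gsPath_isPath hw (i + 1)).numGE_one, numGE_gsPath i hn, Psum_one] at this
  omega

lemma Hl_gsPath_le (hl : 0 < l) (hw : ∀ i, l ≤ Psum h i n) {i : ℕ} (hhi : h i ≤ l) :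
    Hl l (gsPath n l h (i + 1)) (gsPath n l h i) ≤ h i := by
  have : NeZero l := ⟨hl.ne'⟩
  let σ : Equiv.Perm (Fin l) := Equiv.addRight (Fin.ofNat l (h i))
  have hσ (j : Fin l) (hj : j + h i < l) : (σ j : ℕ) = j + h i := by
    simp only [σ, Equiv.coe_addRight, Fin.val_add, Fin.val_ofNat,
      Nat.mod_eq_of_lt ((Nat.le_add_left _ _).trans_lt hj), Nat.mod_eq_of_lt hj]
  calc Hl l (gsPath n l h (i + 1)) (gsPath n l h i)
      ≤ ∑ j : Fin l, H1 (gsPath n l h (i + 1) j) (gsPath n l h i (σ j)) := Hl_le_sum_H1 _ _ _ σ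
    _ ≤ ∑ j : Fin l, if l ≤ j + h i then 1 else 0 := sum_le_sum fun j _ => by
        split_ifs with hj
        · unfold H1; split_ifs <;> omega
        · rw [H1, if_pos (hσ j (not_le.1 hj) ▸ gsPath_succ_lt_gsPath hw (not_le.1 hj))]
    _ = #{k ∈ range l | l - h i ≤ k} := by
        rw [card_filter, Fin.sum_univ_eq_sum_range (fun k => if l ≤ k + h i then 1 else 0)]
        exact sum_congr rfl fun k _ => by simp only [Nat.sub_le_iff_le_add]
    _ = h i := by
        have hIco : {k ∈ range l | l - h i ≤ k} = Ico (l - h i) l := by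
          ext k
          simp only [mem_filter, mem_range, mem_Ico]
          omega
        rw [hIco, Nat.card_Ico]
        omega

lemma locEnergy_gsPath (hl : 0 < l) (hw : ∀ i, l ≤ Psum h i n) (hhl : ∀ i, h i ≤ l) :
    locEnergy l (gsPath n l h) = h :=
  funext fun i => (Hl_gsPath_le hl hw (hhl i)).antisymm (le_Hl_gsPath hl hw (hhl i))

end GroundState

namespace IsKseq

variable {n l : ℕ} {K : ℕ → ℕ}

lemma Psum_eq (hK : IsKseq n l K) (i : ℕ) : Psum K i n = l := by
  induction i with
  | zero => simpa [Psum] using hK.2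
  | succ i ih =>
    have := Psum_succ K i n
    rw [Psum_succ', hK.1, ih] at this
    omega

lemma apply_le (hK : IsKseq n l K) (hn : 0 < n) (i : ℕ) : K i ≤ l :=
  hK.Psum_eq i ▸ Psum_one K i ▸ Psum_mono K i hn

lemma locEnergy_gsPath (hK : IsKseq n l K) (hn : 0 < n) (hl : 0 < l) :
    locEnergy l (gsPath n l K) = K :=
  _root_.locEnergy_gsPath hl (fun i => (hK.Psum_eq i).ge) (hK.apply_le hn)

end IsKseq

lemma finDiff_iff_eventually {α : Type*} {a b : ℕ → α} : FinDiff a b ↔ ∀ᶠ i in atTop, a i = b i := by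
  rw [← Nat.cofinite_eq_atTop, eventually_cofinite]
  rfl

lemma FinDiff.locEnergy {s t : ℕ → ℕ → ℕ} (hst : FinDiff s t) (l : ℕ) :
    FinDiff (locEnergy l s) (locEnergy l t) := by
  obtain ⟨N, hN⟩ := eventually_atTop.1 (finDiff_iff_eventually.1 hst)
  refine finDiff_iff_eventually.2 (eventually_atTop.2 ⟨N, fun i hi => ?_⟩)
  simp only [_root_.locEnergy, hN i hi, hN (i + 1) (by omega)]

lemma FinDiff.gsPath {h K : ℕ → ℕ} (hK : FinDiff h K) (n l : ℕ) :
    FinDiff (gsPath n l h) (gsPath n l K) := by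
  obtain ⟨N, hN⟩ := eventually_atTop.1 (finDiff_iff_eventually.1 hK)
  refine finDiff_iff_eventually.2 (eventually_atTop.2 ⟨N, fun i hi => ?_⟩)
  have hPsum : Psum h i = Psum K i := funext fun _ => sum_congr rfl fun j _ => hN (i + j) (by omega)
  unfold _root_.gsPath
  rw [hPsum]

/-- For `h ∈ {0,…,l}^ℕ`, `h ∈ Sp_K` iff
(i) `h_i + h_{i+1} + ⋯ + h_{i+n-1} ≥ l` for every `i`, and (ii) `h ≈ K`. -/
theorem spectrum_characterization (n l : ℕ) (hn : 2 ≤ n) (hl : 1 ≤ l)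
    (K : ℕ → ℕ) (hK : IsKseq n l K)
    (h : ℕ → ℕ) (hhl : ∀ i, h i ≤ l) :
    h ∈ SpSet n l K ↔
      ((∀ i : ℕ, l ≤ ∑ j ∈ Finset.range n, h (i + j)) ∧ FinDiff h K) := by
  constructor
  · rintro ⟨s, hs, hsK, rfl⟩
    have hspec := hsK.locEnergy l
    rw [hK.locEnergy_gsPath (by omega) hl] at hspec
    exact ⟨hs.le_Psum_locEnergy, hspec⟩
  · rintro ⟨hw, hhK⟩
    exact ⟨gsPath n l h, gsPath_isPath hw, hhK.gsPath n l, locEnergy_gsPath hl hw hhl⟩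
end
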